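/- Fix r, s ∈ ℂ. For a smooth F : ℝ² → ℂ define f : ℝ² → ℂ by f(t,x) = (1+t²)^{r/2} · exp( s t x² / (1+t²) ) · F( arctan t , x (1+t²)^{−1/2} ), where (1+t²)^{r/2} = exp((r/2)·log(1+t²)). Then for all (t,x), writing θ = arctan t and y = x(1+t²)^{−1/2}: ∂_t f(t,x) = (1+t²)^{r/2} exp( s t x²/(1+t²) ) · ( cos²θ · ∂_θF(θ,y) − y sin θ cos θ · ∂_yF(θ,y) + ( s y² (cos²θ − sin²θ) + r sin θ cos θ ) · F(θ,y) ). -/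

import Mathlib

open Complex

/-- Partial derivative in the first variable. -/
noncomputable def pderivT (f : ℝ → ℝ → ℂ) (t x : ℝ) : ℂ := deriv (fun t' => f t' x) t

/-- Partial derivative in the second variable. -/
noncomputable def pderivX (f : ℝ → ℝ → ℂ) (t x : ℝ) : ℂ := deriv (fun x' => f t x') x

/-- The prefactor `(1+t²)^{r/2} exp(s t x²/(1+t²))`, where
`(1+t²)^{r/2} = exp((r/2) log(1+t²))`. -/
noncomputable def prefac (r s : ℂ) (t x : ℝ) : ℂ :=
  Complex.exp ((r / 2) * (Real.log (1 + t ^ 2) : ℂ))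
    * Complex.exp (s * (t : ℂ) * (x : ℂ) ^ 2 / (1 + (t : ℂ) ^ 2))

/-- The inverse intertwining map from the compact to the noncompact picture:
`f(t,x) = (1+t²)^{r/2} exp(s t x²/(1+t²)) F(arctan t, x(1+t²)^{-1/2})`. -/
noncomputable def fofF (r s : ℂ) (F : ℝ → ℝ → ℂ) (t x : ℝ) : ℂ :=
  prefac r s t x * F (Real.arctan t) (x / Real.sqrt (1 + t ^ 2))

set_option maxHeartbeats 2000000

/-- Transfer of `∂_t` to the compact picture: with `θ = arctan t`, `y = x(1+t²)^{-1/2}`,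
`∂_t f = (1+t²)^{r/2} e^{stx²/(1+t²)} (cos²θ ∂_θF - y sinθ cosθ ∂_yF
  + (s y²(cos²θ - sin²θ) + r sinθ cosθ) F)`. -/
theorem partialT_compact_picture (r s : ℂ)
    (F : ℝ → ℝ → ℂ) (hF : ContDiff ℝ (⊤ : ℕ∞) (fun p : ℝ × ℝ => F p.1 p.2)) :
    ∀ t x : ℝ,
      pderivT (fofF r s F) t x
        = prefac r s t x
          * (((Real.cos (Real.arctan t) : ℝ) : ℂ) ^ 2
                * pderivT F (Real.arctan t) (x / Real.sqrt (1 + t ^ 2))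
             - ((x / Real.sqrt (1 + t ^ 2) : ℝ) : ℂ)
                * ((Real.sin (Real.arctan t) : ℝ) : ℂ)
                * ((Real.cos (Real.arctan t) : ℝ) : ℂ)
                * pderivX F (Real.arctan t) (x / Real.sqrt (1 + t ^ 2))
             + (s * ((x / Real.sqrt (1 + t ^ 2) : ℝ) : ℂ) ^ 2
                  * (((Real.cos (Real.arctan t) : ℝ) : ℂ) ^ 2
                      - ((Real.sin (Real.arctan t) : ℝ) : ℂ) ^ 2)
                + r * ((Real.sin (Real.arctan t) : ℝ) : ℂ)
                    * ((Real.cos (Real.arctan t) : ℝ) : ℂ))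
                * F (Real.arctan t) (x / Real.sqrt (1 + t ^ 2))) := by
  intro t x
  have hc : (0:ℝ) < 1 + t ^ 2 := by positivity
  set θ : ℝ := Real.arctan t with hθdef
  set q : ℝ := Real.sqrt (1 + t ^ 2) with hqdef
  have hq0 : 0 < q := Real.sqrt_pos.mpr hc
  have hq2 : q ^ 2 = 1 + t ^ 2 := Real.sq_sqrt hc.le
  set y : ℝ := x / q with hydef
  -- derivative of 1 + t'^2
  have h1 : HasDerivAt (fun t' : ℝ => 1 + t' ^ 2) (2 * t) t := by
    simpa using (hasDerivAt_pow 2 t).const_add 1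
  -- derivative of arctan
  have hθ : HasDerivAt Real.arctan (1 / (1 + t ^ 2)) t := Real.hasDerivAt_arctan t
  -- derivative of sqrt(1+t'^2)
  have hsq : HasDerivAt (fun t' : ℝ => Real.sqrt (1 + t' ^ 2)) (t / q) t := by
    have h := (Real.hasDerivAt_sqrt hc.ne').comp t h1
    refine h.congr_deriv ?_
    rw [← hqdef]
    field_simp
  -- derivative of y(t') = x / sqrt(1+t'^2)
  have hy : HasDerivAt (fun t' : ℝ => x / Real.sqrt (1 + t' ^ 2))
      (-(t / (1 + t ^ 2)) * y) t := by
    have h := (hasDerivAt_const t x).div hsq hq0.ne'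
    refine h.congr_deriv ?_
    rw [hydef, ← hqdef, ← hq2]
    field_simp
    ring
  -- total derivative of F
  have hFd : Differentiable ℝ (fun p : ℝ × ℝ => F p.1 p.2) := hF.differentiable (by simp)
  set L : ℝ × ℝ →L[ℝ] ℂ := fderiv ℝ (fun p : ℝ × ℝ => F p.1 p.2) (θ, y) with hLdef
  have hL : HasFDerivAt (fun p : ℝ × ℝ => F p.1 p.2) L (θ, y) :=
    (hFd (θ, y)).hasFDerivAt
  -- partial derivatives via L
  have hFθ : pderivT F θ y = L (1, 0) := by
    have hcurve : HasDerivAt (fun t' : ℝ => ((t', y) : ℝ × ℝ)) ((1 : ℝ), (0 : ℝ)) θ :=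
      (hasDerivAt_id θ).prodMk (hasDerivAt_const θ y)
    have := hL.comp_hasDerivAt θ hcurve
    exact this.deriv
  have hFy : pderivX F θ y = L (0, 1) := by
    have hcurve : HasDerivAt (fun x' : ℝ => ((θ, x') : ℝ × ℝ)) ((0 : ℝ), (1 : ℝ)) y :=
      (hasDerivAt_const y θ).prodMk (hasDerivAt_id y)
    have := hL.comp_hasDerivAt y hcurve
    exact this.deriv
  have hLlin : ∀ a b : ℝ, L (a, b) = a • L (1, 0) + b • L (0, 1) := by
    intro a b
    have hab : ((a, b) : ℝ × ℝ) = a • ((1 : ℝ), (0 : ℝ)) + b • ((0 : ℝ), (1 : ℝ)) := by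
      simp [Prod.ext_iff]
    rw [hab, map_add, map_smul, map_smul]
  -- derivative of the composition F(arctan t', y(t'))
  have hγ : HasDerivAt (fun t' : ℝ => ((Real.arctan t', x / Real.sqrt (1 + t' ^ 2)) : ℝ × ℝ))
      ((1 / (1 + t ^ 2), -(t / (1 + t ^ 2)) * y) : ℝ × ℝ) t := hθ.prodMk hy
  have hcomp : HasDerivAt (fun t' : ℝ => F (Real.arctan t') (x / Real.sqrt (1 + t' ^ 2)))
      (L (1 / (1 + t ^ 2), -(t / (1 + t ^ 2)) * y)) t := by have := hL.comp_hasDerivAt t hγ; exact this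
  -- derivative of A(t') = exp((r/2) log(1+t'^2))
  have hlog : HasDerivAt (fun t' : ℝ => Real.log (1 + t' ^ 2)) (2 * t / (1 + t ^ 2)) t := by
    have h := (Real.hasDerivAt_log hc.ne').comp t h1
    refine h.congr_deriv ?_
    field_simp
  have hA : HasDerivAt (fun t' : ℝ => Complex.exp ((r / 2) * (Real.log (1 + t' ^ 2) : ℂ)))
      (Complex.exp ((r / 2) * (Real.log (1 + t ^ 2) : ℂ))
        * (r * t / (1 + (t : ℂ) ^ 2))) t := by
    have hcC : (1 : ℂ) + (t : ℂ) ^ 2 ≠ 0 := by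
      intro h
      have : ((1 + t ^ 2 : ℝ) : ℂ) = 0 := by push_cast; linear_combination h
      exact hc.ne' (by exact_mod_cast this)
    have h := ((hlog.ofReal_comp).const_mul (r / 2)).cexp
    convert h using 1
    push_cast
    field_simp
  -- derivative of B(t') = exp(s t' x^2 / (1+t'^2))
  have hcC : (1 : ℂ) + (t : ℂ) ^ 2 ≠ 0 := by
    intro h
    have : ((1 + t ^ 2 : ℝ) : ℂ) = 0 := by push_cast; linear_combination h
    exact hc.ne' (by exact_mod_cast this)
  have hg : HasDerivAt (fun t' : ℝ => t' / (1 + t' ^ 2))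
      ((1 - t ^ 2) / (1 + t ^ 2) ^ 2) t := by
    have h := (hasDerivAt_id t).div h1 hc.ne'
    refine h.congr_deriv ?_
    field_simp
    simp only [id]; ring
  have hBrw : (fun t' : ℝ => Complex.exp (s * (t' : ℂ) * (x : ℂ) ^ 2 / (1 + (t' : ℂ) ^ 2)))
      = fun t' : ℝ => Complex.exp ((s * (x : ℂ) ^ 2) * ((t' / (1 + t' ^ 2) : ℝ) : ℂ)) := by
    funext t'
    have hc' : (0:ℝ) < 1 + t' ^ 2 := by positivity
    have hcC' : (1 : ℂ) + (t' : ℂ) ^ 2 ≠ 0 := by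
      intro h
      have : ((1 + t' ^ 2 : ℝ) : ℂ) = 0 := by push_cast; linear_combination h
      exact hc'.ne' (by exact_mod_cast this)
    congr 1
    push_cast
    field_simp
  have hB : HasDerivAt (fun t' : ℝ => Complex.exp (s * (t' : ℂ) * (x : ℂ) ^ 2 / (1 + (t' : ℂ) ^ 2)))
      (Complex.exp (s * (t : ℂ) * (x : ℂ) ^ 2 / (1 + (t : ℂ) ^ 2))
        * (s * (x : ℂ) ^ 2 * (((1 - t ^ 2) / (1 + t ^ 2) ^ 2 : ℝ) : ℂ))) t := by
    rw [hBrw]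
    have h := ((hg.ofReal_comp).const_mul (s * (x : ℂ) ^ 2)).cexp
    have hval : Complex.exp ((s * (x : ℂ) ^ 2) * ((t / (1 + t ^ 2) : ℝ) : ℂ))
        = Complex.exp (s * (t : ℂ) * (x : ℂ) ^ 2 / (1 + (t : ℂ) ^ 2)) := by
      congr 1
      push_cast
      field_simp
    convert h using 1
    rw [hval]
  -- full product
  have hfun : (fun t' : ℝ => fofF r s F t' x)
      = fun t' : ℝ =>
          Complex.exp ((r / 2) * (Real.log (1 + t' ^ 2) : ℂ))
            * Complex.exp (s * (t' : ℂ) * (x : ℂ) ^ 2 / (1 + (t' : ℂ) ^ 2))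
            * F (Real.arctan t') (x / Real.sqrt (1 + t' ^ 2)) := by
    funext t'
    rfl
  have hAll := (hA.mul hB).mul hcomp
  have hderiv : pderivT (fofF r s F) t x
      = (Complex.exp ((r / 2) * (Real.log (1 + t ^ 2) : ℂ))
            * (r * t / (1 + (t : ℂ) ^ 2))
            * Complex.exp (s * (t : ℂ) * (x : ℂ) ^ 2 / (1 + (t : ℂ) ^ 2))
          + Complex.exp ((r / 2) * (Real.log (1 + t ^ 2) : ℂ))
            * (Complex.exp (s * (t : ℂ) * (x : ℂ) ^ 2 / (1 + (t : ℂ) ^ 2))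
              * (s * (x : ℂ) ^ 2 * (((1 - t ^ 2) / (1 + t ^ 2) ^ 2 : ℝ) : ℂ))))
          * F θ y
        + Complex.exp ((r / 2) * (Real.log (1 + t ^ 2) : ℂ))
            * Complex.exp (s * (t : ℂ) * (x : ℂ) ^ 2 / (1 + (t : ℂ) ^ 2))
            * L (1 / (1 + t ^ 2), -(t / (1 + t ^ 2)) * y) := by
    unfold pderivT
    rw [hfun]
    exact hAll.deriv
  rw [hderiv, hLlin, hFθ, hFy, hθdef, Real.cos_arctan, Real.sin_arctan, ← hqdef, hydef]
  -- now pure algebra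
  have hqC : ((q : ℂ)) ≠ 0 := by exact_mod_cast hq0.ne'
  have hq2C : ((q : ℂ)) ^ 2 = 1 + (t : ℂ) ^ 2 := by exact_mod_cast hq2
  have hcRC : ((1 + t ^ 2 : ℝ) : ℂ) ≠ 0 := by exact_mod_cast hc.ne'
  unfold prefac
  rw [← hθdef]
  rw [Complex.real_smul, Complex.real_smul]
  push_cast
  rw [← hq2C]
  field_simp
  ring
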